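/- Let 𝒞 ⊆ ℝ^d be an open set and 𝒟 = {q₁,…,q_N} ⊆ ℝ^d. If 𝒟 is a sufficient decision dataset for 𝒞 and 𝒳, then Δ(𝒳,𝒞) ⊆ span 𝒟. -/

import Mathlib

/-!
A direction `δ ∈ Δ(𝒳, 𝒞)` comes with an extreme point `x` and a cost `c ∈ 𝒞` for which `x` is
optimal and `c ⊥ δ`, so `x` and `x + εδ` are both `c`-optimal. If `δ ∉ span 𝒟`, pick `u ⊥ 𝒟` with
`⟪u, δ⟫ > 0`. For small `t > 0` the costs `c ± t u` lie in the open set `𝒞` and agree on `𝒟`, so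
sufficiency forces them to have the same (nonempty, by compactness) set of minimisers. But a common
minimiser `z` would give `2⟪c, z⟫ ≤ ⟪c, x⟫ + ⟪c, x + εδ⟫ - tε⟪u, δ⟫ < 2⟪c, z⟫`.
-/

open scoped RealInnerProductSpace

noncomputable section

abbrev Vec (d : ℕ) := EuclideanSpace ℝ (Fin d)

/-- The feasible set 𝒳 = {x : Ax = b, x ≥ 0}. -/
def feasibleSet {d m : ℕ} (A : Matrix (Fin m) (Fin d) ℝ) (b : Fin m → ℝ) : Set (Vec d) :=
  {x | A.mulVec x = b ∧ ∀ i, 0 ≤ x i}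

/-- argmin_{x ∈ X} c⊤x. -/
def argminSet {d : ℕ} (X : Set (Vec d)) (c : Vec d) : Set (Vec d) :=
  {x | x ∈ X ∧ ∀ y ∈ X, ⟪c, x⟫ ≤ ⟪c, y⟫}

/-- 𝒟 = {q 1, …, q N} is a sufficient decision dataset for 𝒞 and 𝒳. -/
def SufficientDataset {d N : ℕ} (C : Set (Vec d)) (X : Set (Vec d)) (q : Fin N → Vec d) : Prop :=
  ∃ Xhat : (Fin N → ℝ) → Set (Vec d),
    ∀ c ∈ C, Xhat (fun i => ⟪c, q i⟫) = argminSet X c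

/-- Extreme points of X. -/
def extremePts {d : ℕ} (X : Set (Vec d)) : Set (Vec d) :=
  {x | x ∈ X ∧ ¬ ∃ (l : ℝ) (y z : Vec d), y ∈ X ∧ z ∈ X ∧ y ≠ z ∧
    l ∈ Set.Ioo (0:ℝ) 1 ∧ x = l • y + (1 - l) • z}

/-- Feasible directions from x in X. -/
def FD {d : ℕ} (X : Set (Vec d)) (x : Vec d) : Set (Vec d) :=
  {δ | ∃ ε : ℝ, 0 < ε ∧ x + ε • δ ∈ X}

/-- Extreme directions of FD(x). -/
def extremeDirs {d : ℕ} (X : Set (Vec d)) (x : Vec d) : Set (Vec d) :=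
  {δ | δ ∈ FD X x ∧ δ ≠ 0 ∧ ¬ ∃ (l : ℝ) (δ₁ δ₂ : Vec d), δ₁ ∈ FD X x ∧ δ₂ ∈ FD X x ∧
    (∀ t : ℝ, δ₁ ≠ t • δ₂) ∧ l ∈ Set.Ioo (0:ℝ) 1 ∧ δ = l • δ₁ + (1 - l) • δ₂}

/-- Optimality cone Λ(x). -/
def Lam {d : ℕ} (X : Set (Vec d)) (x : Vec d) : Set (Vec d) :=
  {c | x ∈ argminSet X c}

/-- The face F(x, δ) = Λ(x) ∩ {δ}^⊥. -/
def faceF {d : ℕ} (X : Set (Vec d)) (x δ : Vec d) : Set (Vec d) :=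
  Lam X x ∩ {c | ⟪c, δ⟫ = 0}

/-- Relevant extreme directions Δ(𝒳, 𝒞). -/
def DeltaSet {d : ℕ} (X C : Set (Vec d)) : Set (Vec d) :=
  {δ | ∃ x ∈ extremePts X, δ ∈ extremeDirs X x ∧ (faceF X x δ ∩ C).Nonempty}

/-- F₀: the span of the canonical basis vectors eᵢ with xᵢ ≠ 0 for some x ∈ X. -/
def F0 {d : ℕ} (X : Set (Vec d)) : Submodule ℝ (Vec d) :=
  Submodule.span ℝ {v | ∃ i : Fin d, (∃ x ∈ X, x i ≠ 0) ∧ v = EuclideanSpace.single i 1}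

/-- Ker A as a submodule of ℝ^d. -/
def kerA {d m : ℕ} (A : Matrix (Fin m) (Fin d) ℝ) : Submodule ℝ (Vec d) :=
  LinearMap.ker ((Matrix.mulVecLin A).comp (WithLp.linearEquiv 2 ℝ (Fin d → ℝ)).toLinearMap)

/-- Reachable optimal solutions 𝒳*(𝒞). -/
def reachable {d : ℕ} (X C : Set (Vec d)) : Set (Vec d) := ⋃ c ∈ C, argminSet X c

/-- dir(𝒳*(𝒞)) = span of differences of reachable solutions. -/
def dirSpan {d : ℕ} (X C : Set (Vec d)) : Submodule ℝ (Vec d) :=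
  Submodule.span ℝ {v | ∃ x₁ ∈ reachable X C, ∃ x₂ ∈ reachable X C, v = x₁ - x₂}

/-- 𝒞-strong neighbors. -/
def StrongNeighbors {d : ℕ} (X C : Set (Vec d)) (x₁ x₂ : Vec d) : Prop :=
  x₂ - x₁ ∈ extremeDirs X x₁ ∧ ∃ c ∈ C, x₁ ∈ argminSet X c ∧ x₂ ∈ argminSet X c

/-- Y is 𝒞-strongly connected by neighboring extreme points. -/
def StronglyConnected {d : ℕ} (X C Y : Set (Vec d)) : Prop :=
  ∀ x ∈ Y, ∀ x' ∈ Y, ∃ (h : ℕ) (seq : Fin (h + 1) → Vec d),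
    (∀ i, seq i ∈ Y) ∧ seq 0 = x ∧ seq (Fin.last h) = x' ∧
    ∀ i : Fin h, StrongNeighbors X C (seq i.castSucc) (seq i.succ)

open Filter Topology

theorem Submodule.exists_mem_orthogonal_inner_pos {E : Type*} [NormedAddCommGroup E]
    [InnerProductSpace ℝ E] {K : Submodule ℝ E} [K.HasOrthogonalProjection] {v : E}
    (hv : v ∉ K) : ∃ u ∈ Kᗮ, 0 < ⟪u, v⟫ := by
  set u := v - K.starProjection v
  have hu : u ∈ Kᗮ := K.sub_starProjection_mem_orthogonal v
  have hu0 : u ≠ 0 := fun h => hv (by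
    rw [sub_eq_zero] at h
    exact h ▸ K.starProjection_apply_mem v)
  refine ⟨u, hu, ?_⟩
  calc 0 < ⟪u, u⟫ := real_inner_self_pos.mpr hu0
    _ = ⟪u, v⟫ := by
      rw [inner_sub_right, K.inner_left_of_mem_orthogonal (K.starProjection_apply_mem v) hu,
        sub_zero]

theorem IsOpen.exists_pos_add_smul_mem_and_sub_smul_mem {E : Type*} [NormedAddCommGroup E]
    [NormedSpace ℝ E] {C : Set E} (hC : IsOpen C) {c : E} (hc : c ∈ C) (u : E) :
    ∃ t : ℝ, 0 < t ∧ c + t • u ∈ C ∧ c - t • u ∈ C := by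
  have hplus : ∀ᶠ t in 𝓝 (0 : ℝ), c + t • u ∈ C :=
    (Continuous.tendsto (by fun_prop) (0 : ℝ)).eventually (by simpa using hC.mem_nhds hc)
  have hminus : ∀ᶠ t in 𝓝 (0 : ℝ), c - t • u ∈ C :=
    (Continuous.tendsto (by fun_prop) (0 : ℝ)).eventually (by simpa using hC.mem_nhds hc)
  obtain ⟨t, hmem, ht⟩ := (((hplus.and hminus).filter_mono nhdsWithin_le_nhds).and
    (self_mem_nhdsWithin : Set.Ioi (0 : ℝ) ∈ 𝓝[>] 0)).exists
  exact ⟨t, ht, hmem⟩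

theorem isClosed_feasibleSet {d m : ℕ} (A : Matrix (Fin m) (Fin d) ℝ) (b : Fin m → ℝ) :
    IsClosed (feasibleSet A b) := by
  have hA : Continuous fun x : Vec d => A.mulVec x :=
    ((Matrix.mulVecLin A).comp
      (WithLp.linearEquiv 2 ℝ (Fin d → ℝ)).toLinearMap).continuous_of_finiteDimensional
  have hnonneg : IsClosed {x : Vec d | ∀ i, 0 ≤ x i} := by
    simp only [Set.ofPred_forall]
    exact isClosed_iInter fun i => isClosed_le continuous_const (EuclideanSpace.proj i).continuous
  exact (isClosed_eq hA continuous_const).inter hnonneg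

theorem IsCompact.nonempty_argminSet {d : ℕ} {X : Set (Vec d)} (hX : IsCompact X)
    (hne : X.Nonempty) (c : Vec d) : (argminSet X c).Nonempty := by
  obtain ⟨z, hz, hmin⟩ := hX.exists_isMinOn hne (f := fun w => ⟪c, w⟫) (by fun_prop)
  exact ⟨z, hz, fun w hw => hmin hw⟩

theorem add_smul_mem_argminSet {d : ℕ} {X : Set (Vec d)} {c x δ : Vec d} {ε : ℝ}
    (hx : x ∈ argminSet X c) (hcδ : ⟪c, δ⟫ = 0) (hy : x + ε • δ ∈ X) :
    x + ε • δ ∈ argminSet X c := by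
  refine ⟨hy, fun w hw => ?_⟩
  rw [inner_add_right, real_inner_smul_right, hcδ, mul_zero, add_zero]
  exact hx.2 w hw

theorem disjoint_argminSet_add_sub {d : ℕ} {X : Set (Vec d)} {c u x y : Vec d} {t : ℝ}
    (hx : x ∈ argminSet X c) (hy : y ∈ argminSet X c) (hxy : ⟪u, x⟫ < ⟪u, y⟫) (ht : 0 < t) :
    Disjoint (argminSet X (c + t • u)) (argminSet X (c - t • u)) := by
  refine Set.disjoint_left.mpr fun z hplus hminus => ?_
  have h₁ := hplus.2 x hx.1
  have h₂ := hminus.2 y hy.1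
  simp only [inner_add_left, inner_sub_left, real_inner_smul_left] at h₁ h₂
  linarith [hx.2 z hplus.1, hy.2 z hplus.1, mul_lt_mul_of_pos_left hxy ht]

theorem SufficientDataset.argminSet_eq {d N : ℕ} {C X : Set (Vec d)} {q : Fin N → Vec d}
    (hsuff : SufficientDataset C X q) {c c' : Vec d} (hc : c ∈ C) (hc' : c' ∈ C)
    (hcc' : ∀ i, ⟪c, q i⟫ = ⟪c', q i⟫) : argminSet X c = argminSet X c' := by
  obtain ⟨Xhat, hXhat⟩ := hsuff
  rw [← hXhat c hc, ← hXhat c' hc', funext hcc']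

/-- for an open uncertainty set 𝒞, sufficiency of 𝒟 implies
Δ(𝒳,𝒞) ⊆ span 𝒟. -/
theorem stmt9 {d m N : ℕ} (A : Matrix (Fin m) (Fin d) ℝ) (b : Fin m → ℝ)
    (hne : (feasibleSet A b).Nonempty) (hbdd : Bornology.IsBounded (feasibleSet A b))
    (C : Set (Vec d)) (hCopen : IsOpen C)
    (q : Fin N → Vec d)
    (hsuff : SufficientDataset C (feasibleSet A b) q) :
    DeltaSet (feasibleSet A b) C ⊆ ↑(Submodule.span ℝ (Set.range q)) := by
  rintro δ ⟨x, -, hδ, c, ⟨hxc, hcδ⟩, hcC⟩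
  by_contra hδq
  obtain ⟨ε, hε, hxδ⟩ := hδ.1
  obtain ⟨u, hu, huδ⟩ := Submodule.exists_mem_orthogonal_inner_pos hδq
  obtain ⟨t, ht, hplus, hminus⟩ := hCopen.exists_pos_add_smul_mem_and_sub_smul_mem hcC u
  have hsame :
      argminSet (feasibleSet A b) (c + t • u) = argminSet (feasibleSet A b) (c - t • u) :=
    hsuff.argminSet_eq hplus hminus fun i => by
      have huq : ⟪u, q i⟫ = 0 :=
        Submodule.inner_left_of_mem_orthogonal (Submodule.subset_span (Set.mem_range_self i)) hu
      simp only [inner_add_left, inner_sub_left, real_inner_smul_left, huq, mul_zero, add_zero,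
        sub_zero]
  have hux : ⟪u, x⟫ < ⟪u, x + ε • δ⟫ := by
    rw [inner_add_right, real_inner_smul_right]
    linarith [mul_pos hε huδ]
  have hdisj := disjoint_argminSet_add_sub hxc (add_smul_mem_argminSet hxc hcδ hxδ) hux ht
  obtain ⟨z, hz⟩ := (Metric.isCompact_of_isClosed_isBounded (isClosed_feasibleSet A b) hbdd)
    |>.nonempty_argminSet hne (c + t • u)
  exact hdisj.ne_of_mem hz (hsame ▸ hz) rfl
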